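/- arXiv:2511.08559 — 3 statements merged into one kernel-verified Lean document; each statement's English description precedes it below -/
import Mathlib

section
/- Let E be a real inner product space, let g : E → ℝ be m-strongly convex with m > 0 and global minimizer x₀, and let h : E → ℝ be convex and L-Lipschitz with L ≥ 0. If x₁ is a global minimizer of g + h, then ‖x₁ − x₀‖ ≤ L/m. -/
/-- Limit helper: if (1-t)*c ≤ b for all t ∈ (0,1), then c ≤ b. -/
lemma aux_limit (b c : ℝ) (hc : 0 ≤ c)
    (h : ∀ t : ℝ, 0 < t → t < 1 → (1 - t) * c ≤ b) : c ≤ b := by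
  refine le_of_forall_pos_le_add fun ε hε => ?_
  have ht1 : (0:ℝ) < min (1/2) (ε / (c + 1)) := by
    have : 0 < ε / (c + 1) := div_pos hε (by linarith)
    positivity
  have ht2 : min (1/2) (ε / (c + 1)) < 1 := lt_of_le_of_lt (min_le_left _ _) (by norm_num)
  have := h _ ht1 ht2
  have h3 : min (1/2) (ε / (c + 1)) ≤ ε / (c + 1) := min_le_right _ _
  have h4 : min (1/2) (ε / (c + 1)) * (c + 1) ≤ ε := by
    rw [← le_div_iff₀ (by linarith : (0:ℝ) < c + 1)]
    exact h3
  nlinarith [ht1, h4]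

/-- Strongly convex minimizer inequality. -/
lemma aux_strong {E : Type*} [NormedAddCommGroup E] [InnerProductSpace ℝ E]
    (f : E → ℝ) (m : ℝ)
    (hf : ∀ x y : E, ∀ t : ℝ, 0 ≤ t → t ≤ 1 →
      f (t • x + (1 - t) • y) ≤
        t * f x + (1 - t) * f y - (m / 2) * t * (1 - t) * ‖x - y‖ ^ 2)
    (hm : 0 < m) (x₀ : E) (hx₀ : ∀ x, f x₀ ≤ f x) (x : E) :
    f x₀ + (m / 2) * ‖x - x₀‖ ^ 2 ≤ f x := by
  have key : (m / 2) * ‖x - x₀‖ ^ 2 ≤ f x - f x₀ := by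
    refine aux_limit _ _ (by positivity) fun t ht0 ht1 => ?_
    have h1 := hx₀ (t • x + (1 - t) • x₀)
    have h2 := hf x x₀ t ht0.le ht1.le
    have : t * ((1 - t) * ((m / 2) * ‖x - x₀‖ ^ 2)) ≤ t * (f x - f x₀) := by
      nlinarith
    have := le_of_mul_le_mul_left (by linarith [this] : t * ((1 - t) * ((m / 2) * ‖x - x₀‖ ^ 2)) ≤ t * (f x - f x₀)) ht0
    linarith
  linarith

/-- If g is m-strongly convex with global minimizer x₀, h is convex and
L-Lipschitz, and x₁ globally minimizes g + h, then ‖x₁ − x₀‖ ≤ L/m. -/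
theorem stmt3 {E : Type*} [NormedAddCommGroup E] [InnerProductSpace ℝ E]
    (g h : E → ℝ) (m L : ℝ) (hm : 0 < m) (hL : 0 ≤ L)
    (hg : ∀ x y : E, ∀ t : ℝ, 0 ≤ t → t ≤ 1 →
      g (t • x + (1 - t) • y) ≤
        t * g x + (1 - t) * g y - (m / 2) * t * (1 - t) * ‖x - y‖ ^ 2)
    (hconv : ConvexOn ℝ Set.univ h)
    (hlip : ∀ x y : E, |h x - h y| ≤ L * ‖x - y‖)
    (x₀ x₁ : E) (hx₀ : ∀ x, g x₀ ≤ g x) (hx₁ : ∀ x, g x₁ + h x₁ ≤ g x + h x) :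
    ‖x₁ - x₀‖ ≤ L / m := by
  set d := ‖x₁ - x₀‖ with hd
  have hd0 : 0 ≤ d := norm_nonneg _
  have A : g x₀ + (m / 2) * ‖x₁ - x₀‖ ^ 2 ≤ g x₁ := aux_strong g m hg hm x₀ hx₀ x₁
  have B : (g x₁ + h x₁) + (m / 2) * ‖x₀ - x₁‖ ^ 2 ≤ g x₀ + h x₀ := by
    refine aux_strong (fun x => g x + h x) m ?_ hm x₁ hx₁ x₀
    intro x y t ht0 ht1
    have hcv := hconv.2 (Set.mem_univ x) (Set.mem_univ y) ht0 (by linarith : (0:ℝ) ≤ 1 - t) (by ring)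
    have := hg x y t ht0 ht1
    simp only [smul_eq_mul] at hcv
    linarith
  have hnorm : ‖x₀ - x₁‖ = d := by rw [hd, norm_sub_rev]
  rw [hnorm] at B
  have C : m * d ^ 2 ≤ h x₀ - h x₁ := by linarith
  have D : h x₀ - h x₁ ≤ L * d := by
    have := hlip x₀ x₁
    rw [norm_sub_rev] at this
    exact le_trans (le_abs_self _) this
  have E : m * d ^ 2 ≤ L * d := le_trans C D
  rcases eq_or_lt_of_le hd0 with h0 | h0
  · rw [← h0]; positivity
  · rw [le_div_iff₀ hm]
    have : m * d ≤ L := by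
      have := mul_le_mul_of_nonneg_right E (le_of_lt (inv_pos.mpr h0))
      field_simp at this
      nlinarith
    linarith
end

section
/- Under the finite-sample linear model with pseudo-outcome, any global minimizer θ̂(λ) of the weighted-Lasso objective satisfies ‖θ̂(λ) − θ̂(0)‖² ≤ λ² (Σ_{j=1}^p w_j²) / (4 n² μ²), where μ > 0 is the smallest eigenvalue of Σ̂ and θ̂(0) is the unpenalized least-squares minimizer. -/
open Matrix Finset

private lemma aux_le_zero {A B : ℝ} (h : ∀ s : ℝ, 0 < s → s ≤ 1 → A ≤ s * B) : A ≤ 0 := by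
  by_contra h'
  push_neg at h'
  rcases le_or_gt B 0 with hB | hB
  · have := h 1 one_pos le_rfl
    nlinarith
  · have hs : 0 < min 1 (A / (2 * B)) := lt_min one_pos (by positivity)
    have h1 := h _ hs (min_le_left _ _)
    have h2 : min 1 (A / (2 * B)) * B ≤ (A / (2 * B)) * B :=
      mul_le_mul_of_nonneg_right (min_le_right _ _) hB.le
    have h3 : (A / (2 * B)) * B = A / 2 := by field_simp
    linarith

private lemma aux_eq_zero {c q : ℝ} (h : ∀ s : ℝ, 0 ≤ s ^ 2 * q - 2 * s * c) : c = 0 := by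
  rcases le_or_gt q (-1) with hq | hq
  · have h1 := h 1
    have h2 := h (-1)
    nlinarith
  · set s : ℝ := c / (q + 1) with hsdef
    have hq1 : (0 : ℝ) < q + 1 := by linarith
    have hs : s * (q + 1) = c := by rw [hsdef]; field_simp
    have h2 := h s
    rw [← hs] at h2
    have hs2 : s ^ 2 ≤ 0 := by nlinarith [mul_nonneg (sq_nonneg s) hq1.le]
    have hs0 : s = 0 := by nlinarith [sq_nonneg s]
    rw [← hs, hs0, zero_mul]

private lemma aux_expand {n p : ℕ} (Φ : Matrix (Fin n) (Fin p) ℝ) (Y : Fin n → ℝ)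
    (θ v : Fin p → ℝ) (s : ℝ) :
    ∑ i, (Y i - (Φ *ᵥ (θ + s • v)) i) ^ 2 =
      ∑ i, (Y i - (Φ *ᵥ θ) i) ^ 2
        - 2 * s * ∑ i, (Y i - (Φ *ᵥ θ) i) * (Φ *ᵥ v) i
        + s ^ 2 * ∑ i, ((Φ *ᵥ v) i) ^ 2 := by
  have hmv : ∀ i, (Φ *ᵥ (θ + s • v)) i = (Φ *ᵥ θ) i + s * (Φ *ᵥ v) i := by
    intro i
    simp [Matrix.mulVec_add, Matrix.mulVec_smul]
  have h1 : ∀ i ∈ Finset.univ, (Y i - (Φ *ᵥ (θ + s • v)) i) ^ 2 =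
      (Y i - (Φ *ᵥ θ) i) ^ 2 - 2 * s * ((Y i - (Φ *ᵥ θ) i) * (Φ *ᵥ v) i)
        + s ^ 2 * ((Φ *ᵥ v) i) ^ 2 := by
    intro i _
    rw [hmv i]; ring
  rw [Finset.sum_congr rfl h1, Finset.sum_add_distrib, Finset.sum_sub_distrib,
    ← Finset.mul_sum, ← Finset.mul_sum]

/-- Any global minimizer θ̂(λ) of the weighted-Lasso objective satisfies
‖θ̂(λ) − θ̂(0)‖² ≤ λ² (Σⱼ wⱼ²) / (4 n² μ²), where μ > 0 is the smallest
eigenvalue of Σ̂ (characterized by its quadratic-form lower bound). -/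
theorem stmt5 {n p : ℕ} (hn : 0 < n)
    (Φ : Matrix (Fin n) (Fin p) ℝ) (Sighat : Matrix (Fin p) (Fin p) ℝ)
    (hSig : Sighat = (n : ℝ)⁻¹ • (Φᵀ * Φ)) (hpos : Sighat.PosDef)
    (μ : ℝ) (hμ : 0 < μ)
    (hquad : ∀ v : Fin p → ℝ, μ * ∑ j, (v j) ^ 2 ≤ v ⬝ᵥ (Sighat *ᵥ v))
    (Ytilde : Fin n → ℝ) (lam : ℝ) (hlam : 0 ≤ lam)
    (w : Fin p → ℝ) (hw : ∀ j, 0 ≤ w j)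
    (θlam θ0 : Fin p → ℝ)
    (hθlam : ∀ θ : Fin p → ℝ,
      (∑ i, (Ytilde i - (Φ *ᵥ θlam) i) ^ 2) + lam * ∑ j, w j * |θlam j| ≤
        (∑ i, (Ytilde i - (Φ *ᵥ θ) i) ^ 2) + lam * ∑ j, w j * |θ j|)
    (hθ0 : ∀ θ : Fin p → ℝ,
      ∑ i, (Ytilde i - (Φ *ᵥ θ0) i) ^ 2 ≤ ∑ i, (Ytilde i - (Φ *ᵥ θ) i) ^ 2) :
    ∑ j, (θlam j - θ0 j) ^ 2 ≤ lam ^ 2 * (∑ j, (w j) ^ 2) / (4 * n ^ 2 * μ ^ 2) := by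
  set d : Fin p → ℝ := θ0 - θlam with hd
  -- basic quantities
  set A : ℝ := ∑ i, ((Φ *ᵥ d) i) ^ 2 with hA
  set T : ℝ := ∑ j, (θlam j - θ0 j) ^ 2 with hT
  set W : ℝ := ∑ j, (w j) ^ 2 with hW
  set S : ℝ := ∑ j, w j * |d j| with hS
  have hApos : 0 ≤ A := Finset.sum_nonneg fun i _ => sq_nonneg _
  have hTpos : 0 ≤ T := Finset.sum_nonneg fun j _ => sq_nonneg _
  have hWpos : 0 ≤ W := Finset.sum_nonneg fun j _ => sq_nonneg _
  have hSpos : 0 ≤ S := Finset.sum_nonneg fun j _ => mul_nonneg (hw j) (abs_nonneg _)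
  have hnpos : (0 : ℝ) < n := Nat.cast_pos.mpr hn
  -- step 1: normal equation ⟨Y − Φθ0, Φd⟩ = 0
  have hC0 : ∑ i, (Ytilde i - (Φ *ᵥ θ0) i) * (Φ *ᵥ d) i = 0 := by
    apply aux_eq_zero (q := A)
    intro s
    have h := hθ0 (θ0 + s • d)
    rw [aux_expand] at h
    linarith
  -- step 2: C = ⟨Y − Φθlam, Φd⟩ equals A
  have hCA : ∑ i, (Ytilde i - (Φ *ᵥ θlam) i) * (Φ *ᵥ d) i = A := by
    have hsplit : ∀ i, (Ytilde i - (Φ *ᵥ θlam) i) * (Φ *ᵥ d) i =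
        (Ytilde i - (Φ *ᵥ θ0) i) * (Φ *ᵥ d) i + ((Φ *ᵥ d) i) ^ 2 := by
      intro i
      have hdd : (Φ *ᵥ d) i = (Φ *ᵥ θ0) i - (Φ *ᵥ θlam) i := by
        have hθ : θ0 = θlam + d := by rw [hd]; abel
        rw [hθ, Matrix.mulVec_add]
        simp
      rw [hdd]; ring
    rw [Finset.sum_congr rfl fun i _ => hsplit i, Finset.sum_add_distrib, hC0, zero_add]
  -- step 3: from optimality of θlam along the segment toward θ0
  have hkey : 2 * A ≤ lam * (∑ j, w j * |θ0 j|) - lam * (∑ j, w j * |θlam j|) := by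
    have hmain : (2 * A + lam * (∑ j, w j * |θlam j|) - lam * (∑ j, w j * |θ0 j|)) ≤ 0 := by
      apply aux_le_zero (B := A)
      intro s hs hs1
      have h := hθlam (θlam + s • d)
      rw [aux_expand, hCA] at h
      -- convexity of the penalty along the segment
      have hpen : ∑ j, w j * |(θlam + s • d) j| ≤
          (1 - s) * ∑ j, w j * |θlam j| + s * ∑ j, w j * |θ0 j| := by
        rw [Finset.mul_sum, Finset.mul_sum, ← Finset.sum_add_distrib]
        apply Finset.sum_le_sum
        intro j _
        have hval : (θlam + s • d) j = (1 - s) * θlam j + s * θ0 j := by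
          simp only [hd, Pi.add_apply, Pi.smul_apply, Pi.sub_apply, smul_eq_mul]; ring
        rw [hval]
        have habs : |(1 - s) * θlam j + s * θ0 j| ≤ (1 - s) * |θlam j| + s * |θ0 j| := by
          calc |(1 - s) * θlam j + s * θ0 j| ≤ |(1 - s) * θlam j| + |s * θ0 j| := abs_add_le _ _
            _ = (1 - s) * |θlam j| + s * |θ0 j| := by
                rw [abs_mul, abs_mul, abs_of_nonneg (by linarith : (0:ℝ) ≤ 1 - s),
                  abs_of_nonneg hs.le]
        calc w j * |(1 - s) * θlam j + s * θ0 j|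
            ≤ w j * ((1 - s) * |θlam j| + s * |θ0 j|) :=
              mul_le_mul_of_nonneg_left habs (hw j)
          _ = (1 - s) * (w j * |θlam j|) + s * (w j * |θ0 j|) := by ring
      have hpen' : lam * ∑ j, w j * |(θlam + s • d) j| ≤
          lam * ((1 - s) * ∑ j, w j * |θlam j| + s * ∑ j, w j * |θ0 j|) :=
        mul_le_mul_of_nonneg_left hpen hlam
      nlinarith
    linarith
  -- step 4: penalty difference bounded by weighted ℓ¹ distance
  have hl1 : (∑ j, w j * |θ0 j|) - (∑ j, w j * |θlam j|) ≤ S := by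
    rw [← Finset.sum_sub_distrib]
    apply Finset.sum_le_sum
    intro j _
    have : |θ0 j| - |θlam j| ≤ |d j| := by
      have := abs_sub_abs_le_abs_sub (θ0 j) (θlam j)
      simpa [hd] using this
    nlinarith [hw j, abs_nonneg (d j)]
  -- step 5: Cauchy–Schwarz: S² ≤ W * T
  have hCS : S ^ 2 ≤ W * T := by
    have h := Finset.sum_mul_sq_le_sq_mul_sq Finset.univ w (fun j => |d j|)
    have hWd : ∑ j, (|d j|) ^ 2 = T := by
      apply Finset.sum_congr rfl
      intro j _
      rw [sq_abs]
      simp only [hd, Pi.sub_apply]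
      ring
    rw [hWd] at h
    exact h
  -- step 6: eigenvalue lower bound: n μ T ≤ A
  have hlow : (n : ℝ) * μ * T ≤ A := by
    have h := hquad d
    have hform : d ⬝ᵥ (Sighat *ᵥ d) = (n : ℝ)⁻¹ * A := by
      rw [hSig, Matrix.smul_mulVec, dotProduct_smul, ← Matrix.mulVec_mulVec,
        Matrix.dotProduct_mulVec, Matrix.vecMul_transpose]
      simp [hA, dotProduct, sq, smul_eq_mul]
    have hTd : ∑ j, (d j) ^ 2 = T := by
      apply Finset.sum_congr rfl
      intro j _
      simp only [hd, Pi.sub_apply]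
      ring
    rw [hform, hTd] at h
    calc (n : ℝ) * μ * T = (n : ℝ) * (μ * T) := by ring
      _ ≤ (n : ℝ) * ((n : ℝ)⁻¹ * A) := by
          apply mul_le_mul_of_nonneg_left h hnpos.le
      _ = A := by field_simp
  -- combine: 2 n μ T ≤ λ S, then square and use CS
  have hcomb : 2 * (n : ℝ) * μ * T ≤ lam * S := by
    have h1 : lam * ((∑ j, w j * |θ0 j|) - (∑ j, w j * |θlam j|)) ≤ lam * S :=
      mul_le_mul_of_nonneg_left hl1 hlam
    nlinarith
  have hLHSnn : 0 ≤ 2 * (n : ℝ) * μ * T := by positivity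
  have hsq : (2 * (n : ℝ) * μ * T) ^ 2 ≤ (lam * S) ^ 2 := pow_le_pow_left₀ hLHSnn hcomb 2
  have hfin : 4 * (n : ℝ) ^ 2 * μ ^ 2 * T ^ 2 ≤ lam ^ 2 * W * T := by
    calc 4 * (n : ℝ) ^ 2 * μ ^ 2 * T ^ 2 = (2 * (n : ℝ) * μ * T) ^ 2 := by ring
      _ ≤ (lam * S) ^ 2 := hsq
      _ = lam ^ 2 * S ^ 2 := by ring
      _ ≤ lam ^ 2 * (W * T) := by nlinarith [sq_nonneg lam]
      _ = lam ^ 2 * W * T := by ring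
  -- conclude
  have hden : (0 : ℝ) < 4 * (n : ℝ) ^ 2 * μ ^ 2 := by positivity
  rw [le_div_iff₀ hden]
  rcases eq_or_lt_of_le hTpos with hT0 | hT0
  · rw [← hT0, zero_mul]
    positivity
  · refine le_of_mul_le_mul_right ?_ hT0
    calc T * (4 * (n : ℝ) ^ 2 * μ ^ 2) * T = 4 * (n : ℝ) ^ 2 * μ ^ 2 * T ^ 2 := by ring
      _ ≤ lam ^ 2 * W * T := hfin
end

section
/- Under the finite-sample linear model with pseudo-outcome and unit weights w_j = 1 for all j, the recovered RTL estimator β̂_t = β̂_s + θ̂(λ) satisfies the deterministic excess bound ‖β̂_t − β_t^*‖² ≤ 8(λ² p + ‖Φᵀ ε‖²) / (n² μ²) + 6‖β̂_s − β_s^*‖², where μ > 0 is the smallest eigenvalue of Σ̂. -/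
open Matrix Finset

set_option maxHeartbeats 2000000 in
/-- With unit weights, the recovered RTL estimator β̂ₜ = β̂ₛ + θ̂(λ) satisfies
‖β̂ₜ − βₜ^*‖² ≤ 8(λ²p + ‖Φᵀε‖²)/(n²μ²) + 6‖β̂ₛ − βₛ^*‖². -/
theorem stmt8 {n p : ℕ} (hn : 0 < n)
    (Φ : Matrix (Fin n) (Fin p) ℝ) (Sighat : Matrix (Fin p) (Fin p) ℝ)
    (hSig : Sighat = (n : ℝ)⁻¹ • (Φᵀ * Φ)) (hpos : Sighat.PosDef)
    (μ : ℝ) (hμ : 0 < μ)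
    (hquad : ∀ v : Fin p → ℝ, μ * ∑ j, (v j) ^ 2 ≤ v ⬝ᵥ (Sighat *ᵥ v))
    (βsstar θstar : Fin p → ℝ) (ε : Fin n → ℝ) (Y : Fin n → ℝ)
    (hY : Y = Φ *ᵥ (βsstar + θstar) + ε)
    (βshat : Fin p → ℝ) (Ytilde : Fin n → ℝ)
    (hYt : Ytilde = Y - Φ *ᵥ βshat)
    (lam : ℝ) (hlam : 0 ≤ lam)
    (θlam : Fin p → ℝ)
    (hθlam : ∀ θ : Fin p → ℝ,
      (∑ i, (Ytilde i - (Φ *ᵥ θlam) i) ^ 2) + lam * ∑ j, |θlam j| ≤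
        (∑ i, (Ytilde i - (Φ *ᵥ θ) i) ^ 2) + lam * ∑ j, |θ j|)
    (βthat βtstar : Fin p → ℝ)
    (hβt : βthat = βshat + θlam) (hβtstar : βtstar = βsstar + θstar) :
    ∑ j, (βthat j - βtstar j) ^ 2 ≤
      8 * (lam ^ 2 * p + ∑ j, ((Φᵀ *ᵥ ε) j) ^ 2) / (n ^ 2 * μ ^ 2)
        + 6 * ∑ j, (βshat j - βsstar j) ^ 2 := by
  subst hSig hY hYt hβt hβtstar
  classical
  set e : Fin p → ℝ := βshat + θlam - (βsstar + θstar) with he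
  set S : ℝ := ∑ j, e j ^ 2 with hS
  set T : ℝ := ∑ j, ((Φᵀ *ᵥ ε) j) ^ 2 with hT
  set C : ℝ := ∑ j, (Φᵀ *ᵥ ε) j * e j with hC
  set L : ℝ := ∑ j, |e j| with hL
  clear_value e S T C L
  have hS0 : 0 ≤ S := by rw [hS]; exact Finset.sum_nonneg fun j _ => sq_nonneg _
  have hT0 : 0 ≤ T := by rw [hT]; exact Finset.sum_nonneg fun j _ => sq_nonneg _
  have hL0 : 0 ≤ L := by rw [hL]; exact Finset.sum_nonneg fun j _ => abs_nonneg _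
  -- basic inequality from optimality at θ† = θstar + βsstar - βshat
  have hkey := hθlam (θstar + βsstar - βshat)
  have hres1 : ∀ i, (Φ *ᵥ (βsstar + θstar) + ε - Φ *ᵥ βshat) i - (Φ *ᵥ θlam) i
      = ε i - (Φ *ᵥ e) i := by
    intro i
    simp only [he, Matrix.mulVec_add, Matrix.mulVec_sub, Pi.add_apply, Pi.sub_apply]
    ring
  have hres2 : ∀ i, (Φ *ᵥ (βsstar + θstar) + ε - Φ *ᵥ βshat) i
      - (Φ *ᵥ (θstar + βsstar - βshat)) i = ε i := by
    intro i
    simp only [Matrix.mulVec_add, Matrix.mulVec_sub, Pi.add_apply, Pi.sub_apply]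
    ring
  simp only [hres1, hres2] at hkey
  -- expand the square
  have hexp : ∑ i, (ε i - (Φ *ᵥ e) i) ^ 2
      = ∑ i, ε i ^ 2 - 2 * ∑ i, ε i * (Φ *ᵥ e) i + ∑ i, ((Φ *ᵥ e) i) ^ 2 := by
    rw [Finset.mul_sum, ← Finset.sum_sub_distrib, ← Finset.sum_add_distrib]
    exact Finset.sum_congr rfl fun i _ => by ring
  -- cross term
  have hcross : ∑ i, ε i * (Φ *ᵥ e) i = C := by
    have h1 : ε ⬝ᵥ (Φ *ᵥ e) = (Φᵀ *ᵥ ε) ⬝ᵥ e := by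
      rw [Matrix.dotProduct_mulVec, Matrix.mulVec_transpose]
    rw [hC]
    simpa [dotProduct] using h1
  -- ℓ1 triangle inequality
  have hl1 : ∑ j, |(θstar + βsstar - βshat) j| - ∑ j, |θlam j| ≤ L := by
    rw [hL, ← Finset.sum_sub_distrib]
    apply Finset.sum_le_sum
    intro j _
    have h2 : (θstar + βsstar - βshat) j - θlam j = -(e j) := by
      simp only [he, Pi.add_apply, Pi.sub_apply]; ring
    calc |(θstar + βsstar - βshat) j| - |θlam j|
        ≤ |(θstar + βsstar - βshat) j - θlam j| := abs_sub_abs_le_abs_sub _ _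
      _ = |e j| := by rw [h2, abs_neg]
  -- quadratic lower bound
  have hq := hquad e
  have hQeq : e ⬝ᵥ (((n : ℝ)⁻¹ • (Φᵀ * Φ)) *ᵥ e)
      = (n : ℝ)⁻¹ * ∑ i, ((Φ *ᵥ e) i) ^ 2 := by
    rw [Matrix.smul_mulVec, dotProduct_smul, ← Matrix.mulVec_mulVec,
      Matrix.dotProduct_mulVec, Matrix.vecMul_transpose]
    simp [dotProduct, sq, smul_eq_mul]
  rw [hQeq] at hq
  have hnpos : (0 : ℝ) < n := by exact_mod_cast hn
  have hQlb : (n : ℝ) * μ * S ≤ ∑ i, ((Φ *ᵥ e) i) ^ 2 := by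
    have h2 : (n : ℝ) * (μ * ∑ j, e j ^ 2)
        ≤ (n : ℝ) * ((n : ℝ)⁻¹ * ∑ i, ((Φ *ᵥ e) i) ^ 2) :=
      mul_le_mul_of_nonneg_left hq hnpos.le
    calc (n : ℝ) * μ * S = (n : ℝ) * (μ * ∑ j, e j ^ 2) := by rw [hS]; ring
      _ ≤ (n : ℝ) * ((n : ℝ)⁻¹ * ∑ i, ((Φ *ᵥ e) i) ^ 2) := h2
      _ = ∑ i, ((Φ *ᵥ e) i) ^ 2 := by
          rw [← mul_assoc, mul_inv_cancel₀ (ne_of_gt hnpos), one_mul]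
  -- combine: n μ S ≤ 2C + lam L
  have hmain : (n : ℝ) * μ * S ≤ 2 * C + lam * L := by
    rw [hexp, hcross] at hkey
    have hlamL : lam * (∑ j, |(θstar + βsstar - βshat) j| - ∑ j, |θlam j|) ≤ lam * L :=
      mul_le_mul_of_nonneg_left hl1 hlam
    nlinarith [hQlb]
  -- Cauchy–Schwarz bounds
  have hCS : C ^ 2 ≤ T * S := by
    simpa [hT, hS, hC] using
      Finset.sum_mul_sq_le_sq_mul_sq Finset.univ (fun j => (Φᵀ *ᵥ ε) j) (fun j => e j)
  have hLS : L ^ 2 ≤ (p : ℝ) * S := by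
    have h := Finset.sum_mul_sq_le_sq_mul_sq Finset.univ (fun j => (1 : ℝ)) (fun j => |e j|)
    simp only [one_mul, one_pow, sq_abs, Finset.sum_const, Finset.card_univ,
      Fintype.card_fin, nsmul_eq_mul, mul_one] at h
    simpa [hL, hS] using h
  -- finish
  have hD : (0 : ℝ) < (n : ℝ) ^ 2 * μ ^ 2 := by positivity
  have hfin : S ≤ 8 * (lam ^ 2 * p + T) / ((n : ℝ) ^ 2 * μ ^ 2) := by
    rw [le_div_iff₀ hD]
    rcases eq_or_lt_of_le hS0 with h0 | h0
    · rw [← h0]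
      have h8 : (0 : ℝ) ≤ 8 * (lam ^ 2 * p + T) := by positivity
      linarith
    · have h1 : ((n : ℝ) * μ * S) ^ 2 ≤ (2 * C + lam * L) ^ 2 :=
        pow_le_pow_left₀ (by positivity) hmain 2
      have h3 : lam ^ 2 * L ^ 2 ≤ lam ^ 2 * ((p : ℝ) * S) :=
        mul_le_mul_of_nonneg_left hLS (sq_nonneg lam)
      have key2 : (n : ℝ) ^ 2 * μ ^ 2 * S * S ≤ (8 * T + 2 * lam ^ 2 * p) * S := by
        nlinarith [h1, hCS, h3, sq_nonneg (2 * C - lam * L)]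
      have hdiv : (n : ℝ) ^ 2 * μ ^ 2 * S ≤ 8 * T + 2 * lam ^ 2 * p := by
        by_contra hcon
        push_neg at hcon
        nlinarith [key2, h0, hcon]
      nlinarith [hdiv]
  have hgoal : ∑ j, ((βshat + θlam) j - (βsstar + θstar) j) ^ 2 = S := by
    rw [hS]
    apply Finset.sum_congr rfl
    intro j _
    simp only [he, Pi.add_apply, Pi.sub_apply]
  have hΔ : 0 ≤ 6 * ∑ j, (βshat j - βsstar j) ^ 2 := by positivity
  rw [hgoal]
  linarith
end
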